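/- arXiv:2502.06249 — 9 statements merged into one kernel-verified Lean document; each statement's English description precedes it below -/
import Mathlib

section
/- Let P̲ : Herm(n) → ℝ satisfy (LP1) P̲(A+B) ≥ P̲(A) + P̲(B) for all A, B ∈ Herm(n); (LP2) P̲(λA) = λP̲(A) for all A ∈ Herm(n) and λ ≥ 0; (LP3) P̲(A) ≥ λmin(A) for all A ∈ Herm(n). Then for every A ∈ Herm(n) there exists an ℝ-linear functional P : Herm(n) → ℝ with P(B) ≥ λmin(B) for all B ∈ Herm(n), P(B) ≥ P̲(B) for all B ∈ Herm(n), and P(A) = P̲(A). Consequently, P̲(A) = min{P(A) : P a coherent prevision with P ≥ P̲ pointwise}. -/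
open scoped Pointwise ComplexOrder Matrix

/-- The real vector space of n×n complex Hermitian matrices. -/
abbrev Herm (n : ℕ) : Type := selfAdjoint (Matrix (Fin n) (Fin n) ℂ)

/-- The smallest eigenvalue of a Hermitian matrix. -/
noncomputable def lamMin {n : ℕ} (A : Herm n) : ℝ :=
  ⨅ i, (Matrix.IsHermitian.eigenvalues
    (A.prop : Matrix.IsHermitian (A : Matrix (Fin n) (Fin n) ℂ))) i

/-- The identity matrix, as an element of `Herm n`. -/
noncomputable def hermOne (n : ℕ) : Herm n := ⟨1, IsSelfAdjoint.one _⟩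

/-- A coherent set of desirable measurements (D1–D5). -/
def Coherent {n : ℕ} (D : Set (Herm n)) : Prop :=
  (∀ A ∈ D, ¬ Matrix.PosSemidef ((-A : Herm n) : Matrix (Fin n) (Fin n) ℂ)) ∧
  (∀ A : Herm n, Matrix.PosDef (A : Matrix (Fin n) (Fin n) ℂ) → A ∈ D) ∧
  (∀ A B : Herm n, A ∈ D →
    Matrix.PosSemidef ((B - A : Herm n) : Matrix (Fin n) (Fin n) ℂ) → B ∈ D) ∧
  (∀ A B : Herm n, A ∈ D → B ∈ D → A + B ∈ D) ∧
  (∀ A : Herm n, ∀ c : ℝ, A ∈ D → 0 < c → c • A ∈ D)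

/-- All finite positive linear combinations of elements of `S`. -/
def posi {n : ℕ} (S : Set (Herm n)) : Set (Herm n) :=
  {A | ∃ r : ℕ, 0 < r ∧ ∃ (c : Fin r → ℝ) (B : Fin r → Herm n),
    (∀ k, 0 < c k) ∧ (∀ k, B k ∈ S) ∧ A = ∑ k, c k • B k}

/-- A density operator: a Hermitian positive semidefinite matrix with trace 1. -/
def IsDensity {n : ℕ} (ρ : Matrix (Fin n) (Fin n) ℂ) : Prop :=
  ρ.IsHermitian ∧ ρ.PosSemidef ∧ ρ.trace = 1

/-- A coherent lower prevision is dominated, at every point, by a coherent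
prevision agreeing with it there; hence it is the lower envelope (a pointwise
minimum) of its credal set of dominating coherent previsions. -/
theorem lower_prevision_envelope (n : ℕ) (hn : 1 ≤ n) (LP : Herm n → ℝ)
    (h1 : ∀ A B : Herm n, LP A + LP B ≤ LP (A + B))
    (h2 : ∀ (A : Herm n) (c : ℝ), 0 ≤ c → LP (c • A) = c * LP A)
    (h3 : ∀ A : Herm n, lamMin A ≤ LP A) :
    ∀ A : Herm n,
      (∃ P : Herm n →ₗ[ℝ] ℝ, (∀ B : Herm n, lamMin B ≤ P B) ∧
        (∀ B : Herm n, LP B ≤ P B) ∧ P A = LP A) ∧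
      IsLeast {x : ℝ | ∃ P : Herm n →ₗ[ℝ] ℝ,
        (∀ B : Herm n, lamMin B ≤ P B) ∧ (∀ B : Herm n, LP B ≤ P B) ∧ P A = x} (LP A) := by
  have hLP0 : LP 0 = 0 := by simpa using h2 0 0 le_rfl
  have hle : ∀ B, LP B ≤ -LP (-B) := by
    intro B
    have := h1 B (-B)
    simp [hLP0] at this
    linarith
  intro A
  have key : ∃ P : Herm n →ₗ[ℝ] ℝ, (∀ B : Herm n, lamMin B ≤ P B) ∧
      (∀ B : Herm n, LP B ≤ P B) ∧ P A = LP A := by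
    set q : Herm n → ℝ := fun B => -LP (-B) with hq
    have q_hom : ∀ c : ℝ, 0 < c → ∀ x, q (c • x) = c * q x := by
      intro c hc x
      simp only [hq]
      rw [show -(c • x) = c • (-x) by module, h2 _ c hc.le]
      ring
    have q_add : ∀ x y, q (x + y) ≤ q x + q y := by
      intro x y
      have := h1 (-x) (-y)
      simp only [hq]
      rw [show -(x + y) = -x + -y by module]
      linarith
    have Hsafe : ∀ c : ℝ, c • A = 0 → c • (LP A) = 0 := by
      intro c hc
      by_cases h : c = 0
      · simp [h]
      · have hA0 : A = 0 := by
          have : c⁻¹ • (c • A) = c⁻¹ • (0 : Herm n) := by rw [hc]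
          rwa [smul_smul, inv_mul_cancel₀ h, one_smul, smul_zero] at this
        simp [hA0, hLP0]
    set f := LinearPMap.mkSpanSingleton' (σ := RingHom.id ℝ) A (LP A) Hsafe with hf
    have hfle : ∀ x : f.domain, f x ≤ q x := by
      rintro ⟨x, hx⟩
      rcases Submodule.mem_span_singleton.1 hx with ⟨c, rfl⟩
      rw [LinearPMap.mkSpanSingleton'_apply]
      show c • LP A ≤ q (c • A)
      rcases le_or_gt 0 c with hc | hc
      · rcases hc.eq_or_lt with rfl | hc
        · simp [hq, hLP0]
        · rw [q_hom c hc A]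
          have : c * LP A ≤ c * q A := by
            apply mul_le_mul_of_nonneg_left _ hc.le
            simpa [hq] using hle A
          simpa [smul_eq_mul] using this
      · have hr : c • A = (-c) • (-A) := by module
        rw [hr]
        simp only [hq]
        rw [show -((-c) • (-A)) = (-c) • A by module, h2 _ (-c) (by linarith)]
        rw [smul_eq_mul]; linarith
    obtain ⟨g, hg1, hg2⟩ := exists_extension_of_le_sublinear f q q_hom q_add hfle
    have hdom : ∀ B : Herm n, LP B ≤ g B := by
      intro B
      have := hg2 (-B)
      simp only [hq, neg_neg, map_neg] at this
      linarith
    refine ⟨g, fun B => le_trans (h3 B) (hdom B), hdom, ?_⟩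
    have hA : A ∈ f.domain := Submodule.mem_span_singleton_self A
    have h4 := hg1 ⟨A, hA⟩
    rw [h4]
    exact LinearPMap.mkSpanSingleton'_apply_self A (LP A) Hsafe hA
  refine ⟨key, ?_, ?_⟩
  · obtain ⟨P, hP1, hP2, hP3⟩ := key
    exact ⟨P, hP1, hP2, hP3⟩
  · rintro x ⟨P, hP1, hP2, rfl⟩
    exact hP2 A
end

section
/- Let P̲ : Herm(n) → ℝ satisfy (LP1) P̲(A+B) ≥ P̲(A) + P̲(B); (LP2) P̲(λA) = λP̲(A) for λ ≥ 0; (LP3) P̲(A) ≥ λmin(A). Then for every A ∈ Herm(n), P̲(A) = min{ Re(tr(ρA)) : ρ a density operator with Re(tr(ρB)) ≥ P̲(B) for all B ∈ Herm(n) }, and the minimum is attained by some such density operator ρ. -/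
open scoped Pointwise ComplexOrder Matrix

lemma lamMin_nonneg {n : ℕ} {A : Herm n}
    (h : Matrix.PosSemidef (A : Matrix (Fin n) (Fin n) ℂ)) : 0 ≤ lamMin A :=
  Real.iInf_nonneg fun i => h.eigenvalues_nonneg i

lemma lamMin_algebraMap {n : ℕ} (hn : 0 < n) (c : ℝ) (A : Herm n)
    (hA : (A : Matrix (Fin n) (Fin n) ℂ) = algebraMap ℝ _ c) : lamMin A = c := by
  have : Nonempty (Fin n) := ⟨⟨0, hn⟩⟩
  have key : ∀ i, (Matrix.IsHermitian.eigenvalues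
      (A.prop : Matrix.IsHermitian (A : Matrix (Fin n) (Fin n) ℂ))) i = c := by
    intro i
    have h := Matrix.IsHermitian.eigenvalues_mem_spectrum_real
      (A.prop : Matrix.IsHermitian (A : Matrix (Fin n) (Fin n) ℂ)) i
    have hs : spectrum ℝ (A : Matrix (Fin n) (Fin n) ℂ) = {c} := by
      rw [hA]; exact spectrum.scalar_eq c
    rw [hs] at h
    exact h
  unfold lamMin
  simp only [key]
  exact ciInf_const

lemma exists_dominating_functional {n : ℕ} (LP : Herm n → ℝ)
    (h1 : ∀ A B : Herm n, LP A + LP B ≤ LP (A + B))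
    (h2 : ∀ (A : Herm n) (c : ℝ), 0 ≤ c → LP (c • A) = c * LP A)
    (A : Herm n) (hA : A ≠ 0) :
    ∃ g : Herm n →ₗ[ℝ] ℝ, (∀ B, LP B ≤ g B) ∧ g A = LP A := by
  have LP0 : LP 0 = 0 := by simpa using h2 0 0 le_rfl
  set N : Herm n → ℝ := fun B => -LP (-B) with hN
  have hle : ∀ B, LP B ≤ N B := by
    intro B
    have := h1 B (-B)
    rw [add_neg_cancel, LP0] at this
    simp only [hN]
    linarith
  have N_hom : ∀ c : ℝ, 0 < c → ∀ x, N (c • x) = c * N x := by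
    intro c hc x
    simp only [hN, ← smul_neg, h2 (-x) c hc.le]
    ring
  have N_add : ∀ x y, N (x + y) ≤ N x + N y := by
    intro x y
    have := h1 (-x) (-y)
    rw [show (-x) + (-y) = -(x + y) by abel] at this
    simp only [hN]
    linarith
  have hf : ∀ x : (LinearPMap.mkSpanSingleton A (LP A) hA :
      Herm n →ₗ.[ℝ] ℝ).domain, (LinearPMap.mkSpanSingleton A (LP A) hA) x ≤ N x := by
    rintro ⟨x, hx⟩
    obtain ⟨c, rfl⟩ := Submodule.mem_span_singleton.1 hx
    rw [LinearPMap.mkSpanSingleton'_apply]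
    rcases lt_trichotomy c 0 with hc | hc | hc
    · have e : N (c • A) = c * LP A := by
        simp only [hN]
        rw [show -(c • A) = (-c) • A by simp, h2 A (-c) (by linarith)]
        ring
      rw [e]; simp [smul_eq_mul]
    · subst hc; simp [hN, LP0]
    · rw [N_hom c hc]
      have := hle A
      simp only [smul_eq_mul, RingHom.id_apply]
      nlinarith
  obtain ⟨g, hg_eq, hgN⟩ := exists_extension_of_le_sublinear _ N N_hom N_add hf
  refine ⟨g, ?_, ?_⟩
  · intro B
    have h := hgN (-B)
    rw [map_neg] at h
    simp only [hN, neg_neg] at h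
    linarith
  · have h1' := hg_eq ⟨A, Submodule.mem_span_singleton_self A⟩
    rw [LinearPMap.mkSpanSingleton_apply] at h1'
    rw [h1']

lemma stdBasis_conjT {n : ℕ} (a b : Fin n) :
    (Matrix.single a b (1:ℂ))ᴴ = Matrix.single b a 1 := by
  ext i j
  simp only [Matrix.conjTranspose_apply, Matrix.single, Matrix.of_apply]
  by_cases h1 : a = j ∧ b = i <;> by_cases h2 : b = i ∧ a = j <;>
    simp [h1, h2] <;> tauto

noncomputable def Hmat {n : ℕ} (a b : Fin n) : Herm n :=
  ⟨Matrix.single a b 1 + Matrix.single b a 1, by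
    show Matrix.conjTranspose _ = _
    rw [Matrix.conjTranspose_add, stdBasis_conjT, stdBasis_conjT, add_comm]⟩

noncomputable def Kmat {n : ℕ} (a b : Fin n) : Herm n :=
  ⟨Complex.I • Matrix.single a b 1 - Complex.I • Matrix.single b a 1, by
    show Matrix.conjTranspose _ = _
    rw [Matrix.conjTranspose_sub, Matrix.conjTranspose_smul, Matrix.conjTranspose_smul,
      stdBasis_conjT, stdBasis_conjT]
    simp [Complex.conj_I]
    abel⟩

lemma herm_decomp {n : ℕ} (B : Herm n) : B = ∑ a : Fin n, ∑ b : Fin n,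
    (((((B : Matrix (Fin n) (Fin n) ℂ)) b a).re / 2) • Hmat a b
      + ((-(((B : Matrix (Fin n) (Fin n) ℂ)) b a).im) / 2) • Kmat a b) := by
  have hherm : (B : Matrix (Fin n) (Fin n) ℂ).IsHermitian := B.prop
  apply Subtype.ext
  push_cast
  ext i j
  simp only [Matrix.sum_apply, Matrix.add_apply, Matrix.smul_apply, Hmat, Kmat,
    Matrix.sub_apply, Matrix.single, Matrix.of_apply, smul_eq_mul, ite_and,
    mul_ite, mul_zero, mul_one, Complex.real_smul]
  simp only [mul_add, mul_sub, mul_ite, mul_zero, mul_one, Finset.sum_add_distrib,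
    Finset.sum_sub_distrib, Finset.sum_ite_eq, Finset.sum_ite_eq', Finset.mem_univ, if_true,
    Finset.sum_ite_irrel, Finset.sum_const_zero]
  have h := hherm.apply i j
  rw [← h]
  apply Complex.ext <;>
    simp [Complex.add_re, Complex.sub_re, Complex.mul_re, Complex.mul_im] <;> ring

lemma exists_density {n : ℕ} (hn : 1 ≤ n) (LP : Herm n → ℝ)
    (h1 : ∀ A B : Herm n, LP A + LP B ≤ LP (A + B))
    (h2 : ∀ (A : Herm n) (c : ℝ), 0 ≤ c → LP (c • A) = c * LP A)
    (h3 : ∀ A : Herm n, lamMin A ≤ LP A)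
    (A : Herm n) (hA : A ≠ 0) :
    ∃ ρ : Matrix (Fin n) (Fin n) ℂ, IsDensity ρ ∧
      (∀ B : Herm n, LP B ≤ (Matrix.trace (ρ * (B : Matrix (Fin n) (Fin n) ℂ))).re) ∧
      (Matrix.trace (ρ * (A : Matrix (Fin n) (Fin n) ℂ))).re = LP A := by
  obtain ⟨g, hgLP, hgA⟩ := exists_dominating_functional LP h1 h2 A hA
  -- σ : the density matrix
  set σ : Matrix (Fin n) (Fin n) ℂ := Matrix.of fun a b =>
    ((g (Hmat a b) / 2 : ℝ) : ℂ) + ((g (Kmat a b) / 2 : ℝ) : ℂ) * Complex.I with hσdef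
  -- trace formula
  have key : ∀ B : Herm n, (Matrix.trace (σ * (B : Matrix (Fin n) (Fin n) ℂ))).re = g B := by
    intro B
    have htr : (Matrix.trace (σ * (B : Matrix (Fin n) (Fin n) ℂ))).re
        = ∑ a, ∑ b, (g (Hmat a b) / 2 * (((B : Matrix (Fin n) (Fin n) ℂ)) b a).re
            - g (Kmat a b) / 2 * (((B : Matrix (Fin n) (Fin n) ℂ)) b a).im) := by
      rw [Matrix.trace]
      rw [Complex.re_sum]
      refine Finset.sum_congr rfl fun a _ => ?_
      rw [Matrix.diag_apply, Matrix.mul_apply, Complex.re_sum]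
      refine Finset.sum_congr rfl fun b _ => ?_
      simp [hσdef, Complex.add_re, Complex.mul_re, Complex.add_im, Complex.mul_im]
      try ring
    rw [htr]
    conv_rhs => rw [herm_decomp B]
    rw [map_sum]
    refine Finset.sum_congr rfl fun a _ => ?_
    rw [map_sum]
    refine Finset.sum_congr rfl fun b _ => ?_
    rw [map_add, map_smul, map_smul]
    simp only [smul_eq_mul]
    ring
  -- Hermitian
  have hσH : σ.IsHermitian := by
    ext i j
    have hH : Hmat j i = Hmat i j := Subtype.ext (add_comm _ _)
    have hK : Kmat j i = -Kmat i j := Subtype.ext (by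
      show Complex.I • _ - Complex.I • _ = -(Complex.I • _ - Complex.I • _)
      abel)
    simp only [Matrix.conjTranspose_apply, hσdef, Matrix.of_apply, hH, hK, map_neg]
    apply Complex.ext <;> simp <;> ring
  -- PSD
  have hσPSD : σ.PosSemidef := by
    refine Matrix.posSemidef_iff_dotProduct_mulVec.2 ⟨hσH, fun x => ?_⟩
    set M : Matrix (Fin n) (Fin n) ℂ := Matrix.vecMulVec x (star x) with hM
    have hMpsd : M.PosSemidef := by
      have : M = (Matrix.replicateRow Unit (star x))ᴴ * Matrix.replicateRow Unit (star x) := by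
        ext i j
        simp [hM, Matrix.vecMulVec_apply, Matrix.mul_apply, Matrix.replicateRow, Matrix.conjTranspose_apply]
      rw [this]
      exact Matrix.posSemidef_conjTranspose_mul_self _
    set BH : Herm n := ⟨M, hMpsd.isHermitian⟩ with hBH
    have hquad : dotProduct (star x) (σ *ᵥ x)
        = Matrix.trace (σ * (BH : Matrix (Fin n) (Fin n) ℂ)) := by
      show _ = Matrix.trace (σ * M)
      rw [Matrix.trace]
      simp only [Matrix.diag_apply, Matrix.mul_apply, dotProduct, Matrix.mulVec,
        hM, Matrix.vecMulVec_apply, Pi.star_apply]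
      refine Finset.sum_congr rfl fun a _ => ?_
      rw [Finset.mul_sum]
      refine Finset.sum_congr rfl fun b _ => ?_
      ring
    have hreal : (starRingEnd ℂ) (dotProduct (star x) (σ *ᵥ x))
        = dotProduct (star x) (σ *ᵥ x) := by
      rw [hquad]
      calc (starRingEnd ℂ) (σ * (BH : Matrix (Fin n) (Fin n) ℂ)).trace
          = ((σ * (BH : Matrix (Fin n) (Fin n) ℂ))ᴴ).trace :=
            (Matrix.trace_conjTranspose _).symm
        _ = ((BH : Matrix (Fin n) (Fin n) ℂ)ᴴ * σᴴ).trace := by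
            rw [Matrix.conjTranspose_mul]
        _ = ((BH : Matrix (Fin n) (Fin n) ℂ) * σ).trace := by
            rw [hσH, hMpsd.isHermitian]
        _ = (σ * (BH : Matrix (Fin n) (Fin n) ℂ)).trace := Matrix.trace_mul_comm _ _
    have him : (dotProduct (star x) (σ *ᵥ x)).im = 0 :=
      Complex.conj_eq_iff_im.mp hreal
    have hre : 0 ≤ (dotProduct (star x) (σ *ᵥ x)).re := by
      rw [hquad, key BH]
      refine le_trans (lamMin_nonneg ?_) (le_trans (h3 BH) (hgLP BH))
      exact hMpsd
    rw [Complex.le_def]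
    constructor
    · simpa using hre
    · simpa using him.symm
  -- trace one
  have hsum_one : ∑ a : Fin n, ((1:ℝ)/2) • Hmat a a = hermOne n := by
    apply Subtype.ext
    push_cast
    ext i j
    simp only [Matrix.sum_apply, Matrix.smul_apply, Hmat, Matrix.add_apply,
      Matrix.single, Matrix.of_apply, ite_and, Matrix.one_apply, hermOne,
      Finset.sum_ite_irrel, Finset.sum_const_zero, Finset.sum_ite_eq, Finset.sum_ite_eq',
      Finset.mem_univ, if_true, smul_add, Complex.real_smul, mul_ite, mul_zero, mul_one,
      Finset.sum_add_distrib]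
    by_cases h : i = j <;> simp [h] <;> norm_num
  have htr1 : σ.trace = 1 := by
    have hKaa : ∀ a : Fin n, Kmat a a = (0 : Herm n) := fun a => Subtype.ext (by
      show Complex.I • _ - Complex.I • _ = _
      rw [sub_self]; rfl)
    have : σ.trace = ((∑ a : Fin n, g (Hmat a a) / 2 : ℝ) : ℂ) := by
      rw [Matrix.trace]
      push_cast
      refine Finset.sum_congr rfl fun a _ => ?_
      simp [hσdef, hKaa a, Matrix.diag_apply]
    rw [this]
    have : ∑ a : Fin n, g (Hmat a a) / 2 = g (hermOne n) := by
      rw [← hsum_one, map_sum]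
      refine Finset.sum_congr rfl fun a _ => ?_
      simp [smul_eq_mul]
      ring
    rw [this]
    have hg1 : g (hermOne n) = 1 := by
      have hup : g (hermOne n) ≤ 1 := by
        have hneg : lamMin (-(hermOne n)) = -1 := by
          apply lamMin_algebraMap hn
          show -(1 : Matrix (Fin n) (Fin n) ℂ) = _
          simp [Algebra.algebraMap_eq_smul_one]
        have := le_trans (h3 _) (hgLP (-(hermOne n)))
        rw [hneg, map_neg] at this
        linarith
      have hlo : 1 ≤ g (hermOne n) := by
        have hpos : lamMin (hermOne n) = 1 := by
          apply lamMin_algebraMap hn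
          show (1 : Matrix (Fin n) (Fin n) ℂ) = _
          simp
        have := le_trans (h3 _) (hgLP (hermOne n))
        rw [hpos] at this
        linarith
      linarith
    rw [hg1]
    norm_num
  exact ⟨σ, ⟨hσH, hσPSD, htr1⟩, fun B => le_of_le_of_eq (hgLP B) (key B).symm,
    by rw [key A, hgA]⟩

/-- A coherent lower prevision is the lower envelope of the set of density
operators whose trace-functional dominates it, and the minimum is attained. -/
theorem lower_prevision_density_envelope (n : ℕ) (hn : 1 ≤ n) (LP : Herm n → ℝ)
    (h1 : ∀ A B : Herm n, LP A + LP B ≤ LP (A + B))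
    (h2 : ∀ (A : Herm n) (c : ℝ), 0 ≤ c → LP (c • A) = c * LP A)
    (h3 : ∀ A : Herm n, lamMin A ≤ LP A) :
    ∀ A : Herm n,
      IsLeast {x : ℝ | ∃ ρ : Matrix (Fin n) (Fin n) ℂ, IsDensity ρ ∧
        (∀ B : Herm n, LP B ≤ (Matrix.trace (ρ * (B : Matrix (Fin n) (Fin n) ℂ))).re) ∧
        x = (Matrix.trace (ρ * (A : Matrix (Fin n) (Fin n) ℂ))).re} (LP A) := by
  intro A
  constructor
  · by_cases hA : A = 0
    · subst hA
      have hone : hermOne n ≠ 0 := by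
        intro h
        have h0 : (1 : Matrix (Fin n) (Fin n) ℂ) = 0 := congrArg Subtype.val h
        have := congrFun (congrFun h0 ⟨0, hn⟩) ⟨0, hn⟩
        simp [Matrix.one_apply] at this
      obtain ⟨ρ, hρ, hdom, _⟩ := exists_density hn LP h1 h2 h3 (hermOne n) hone
      refine ⟨ρ, hρ, hdom, ?_⟩
      have LP0 : LP 0 = 0 := by simpa using h2 0 0 le_rfl
      rw [LP0]
      simp
    · obtain ⟨ρ, hρ, hdom, heq⟩ := exists_density hn LP h1 h2 h3 A hA
      exact ⟨ρ, hρ, hdom, heq.symm⟩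
  · rintro x ⟨ρ, hρ, hdom, rfl⟩
    exact hdom A
end

section
/- Let 𝒜 ⊆ Herm(n). The following are equivalent: (i) posi(𝒜) contains no matrix A such that −A is PSD; (ii) there exists a coherent set of desirable measurements D with 𝒜 ⊆ D. Moreover, when these hold, the set E(𝒜) := {A ∈ Herm(n) : A is PD} ∪ (posi(𝒜) + {B ∈ Herm(n) : B is PSD}) is a coherent set of desirable measurements containing 𝒜, and E(𝒜) ⊆ D for every coherent set of desirable measurements D with 𝒜 ⊆ D. -/
open scoped Pointwise ComplexOrder Matrix

/-- The positive definite matrices, as a subset of `Herm n`. -/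
def PDset (n : ℕ) : Set (Herm n) := {A | Matrix.PosDef (A : Matrix (Fin n) (Fin n) ℂ)}

/-- The positive semidefinite matrices, as a subset of `Herm n`. -/
def PSDset (n : ℕ) : Set (Herm n) := {A | Matrix.PosSemidef (A : Matrix (Fin n) (Fin n) ℂ)}

/-- The natural extension of an assessment `𝒜`. -/
def natExt {n : ℕ} (𝒜 : Set (Herm n)) : Set (Herm n) := PDset n ∪ (posi 𝒜 + PSDset n)

namespace NatExtAux

variable {n : ℕ}

lemma real_smul_mat (A : Matrix (Fin n) (Fin n) ℂ) (c : ℝ) : c • A = (c : ℂ) • A := by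
  ext i j; simp [Complex.real_smul]

lemma psd_smul {A : Matrix (Fin n) (Fin n) ℂ} (hA : A.PosSemidef) {c : ℝ} (hc : 0 ≤ c)
    (hH : (c • A).IsHermitian) : (c • A).PosSemidef := by
  refine Matrix.PosSemidef.of_dotProduct_mulVec_nonneg hH fun x => ?_
  rw [real_smul_mat, Matrix.smul_mulVec, dotProduct_smul, smul_eq_mul]
  exact mul_nonneg (by exact_mod_cast hc) (hA.dotProduct_mulVec_nonneg x)

lemma pd_smul {A : Matrix (Fin n) (Fin n) ℂ} (hA : A.PosDef) {c : ℝ} (hc : 0 < c)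
    (hH : (c • A).IsHermitian) : (c • A).PosDef := by
  refine Matrix.PosDef.of_dotProduct_mulVec_pos hH fun x hx => ?_
  rw [real_smul_mat, Matrix.smul_mulVec, dotProduct_smul, smul_eq_mul]
  exact mul_pos (by exact_mod_cast hc) (hA.dotProduct_mulVec_pos hx)

lemma not_psd_neg_of_pd (hn : 1 ≤ n) {A : Matrix (Fin n) (Fin n) ℂ} (hA : A.PosDef) :
    ¬ (-A).PosSemidef := by
  intro h
  set x : Fin n → ℂ := Pi.single (⟨0, hn⟩ : Fin n) 1 with hxdef
  have hx : x ≠ 0 := by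
    intro h0
    have := congrFun h0 ⟨0, hn⟩
    simp [hxdef] at this
  have h1 := hA.dotProduct_mulVec_pos hx
  have h2 := h.dotProduct_mulVec_nonneg x
  rw [Matrix.neg_mulVec, dotProduct_neg] at h2
  have h3 : star x ⬝ᵥ A *ᵥ x ≤ 0 := neg_nonneg.mp h2
  exact absurd h1 (not_lt_of_ge h3)

lemma mem_posi_self {S : Set (Herm n)} {A : Herm n} (hA : A ∈ S) : A ∈ posi S := by
  refine ⟨1, one_pos, fun _ => 1, fun _ => A, fun _ => one_pos, fun _ => hA, ?_⟩
  simp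

lemma posi_add {S : Set (Herm n)} {A B : Herm n} (hA : A ∈ posi S) (hB : B ∈ posi S) :
    A + B ∈ posi S := by
  obtain ⟨r, hr, c, M, hc, hM, hsum⟩ := hA
  obtain ⟨s, hs, d, N, hd, hN, hsum'⟩ := hB
  refine ⟨r + s, by omega, Fin.append c d, Fin.append M N, ?_, ?_, ?_⟩
  · exact fun k => Fin.addCases (fun i => by simpa using hc i) (fun i => by simpa using hd i) k
  · exact fun k => Fin.addCases (fun i => by simpa using hM i) (fun i => by simpa using hN i) k
  · rw [hsum, hsum', Fin.sum_univ_add]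
    simp

lemma posi_smul {S : Set (Herm n)} {A : Herm n} (hA : A ∈ posi S) {t : ℝ} (ht : 0 < t) :
    t • A ∈ posi S := by
  obtain ⟨r, hr, c, M, hc, hM, hsum⟩ := hA
  refine ⟨r, hr, fun k => t * c k, M, fun k => mul_pos ht (hc k), hM, ?_⟩
  rw [hsum, Finset.smul_sum]
  simp [smul_smul]

lemma sum_mem_aux {D : Set (Herm n)}
    (hadd : ∀ A B : Herm n, A ∈ D → B ∈ D → A + B ∈ D)
    (hsmul : ∀ A : Herm n, ∀ c : ℝ, A ∈ D → 0 < c → c • A ∈ D) :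
    ∀ m (c : Fin (m + 1) → ℝ) (B : Fin (m + 1) → Herm n),
      (∀ k, 0 < c k) → (∀ k, B k ∈ D) → ∑ k, c k • B k ∈ D := by
  intro m
  induction m with
  | zero =>
    intro c B hc hB
    simpa using hsmul (B 0) (c 0) (hB 0) (hc 0)
  | succ m ih =>
    intro c B hc hB
    rw [Fin.sum_univ_castSucc]
    exact hadd _ _ (ih (fun k => c k.castSucc) (fun k => B k.castSucc)
      (fun k => hc _) (fun k => hB _)) (hsmul _ _ (hB _) (hc _))

lemma posi_subset {D : Set (Herm n)} (hD : Coherent D) {S : Set (Herm n)} (hS : S ⊆ D) :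
    posi S ⊆ D := by
  rintro A ⟨r, hr, c, B, hc, hB, hsum⟩
  obtain ⟨m, rfl⟩ : ∃ m, r = m + 1 := ⟨r - 1, by omega⟩
  rw [hsum]
  exact sum_mem_aux hD.2.2.2.1 hD.2.2.2.2 m c B hc (fun k => hS (hB k))

lemma natExt_coherent (hn : 1 ≤ n) {𝒜 : Set (Herm n)}
    (hcons : ¬ ∃ A ∈ posi 𝒜,
      Matrix.PosSemidef ((-A : Herm n) : Matrix (Fin n) (Fin n) ℂ)) :
    Coherent (natExt 𝒜) := by
  push_neg at hcons
  refine ⟨?_, ?_, ?_, ?_, ?_⟩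
  · -- D1
    rintro A (hA | hA)
    · exact not_psd_neg_of_pd hn hA
    · rw [Set.mem_add] at hA
      obtain ⟨P, hP, S, hS, hPS⟩ := hA
      intro h
      refine hcons P hP ?_
      have hcoe : ((-P : Herm n) : Matrix (Fin n) (Fin n) ℂ)
          = ((-A : Herm n) : Matrix (Fin n) (Fin n) ℂ) + (S : Matrix (Fin n) (Fin n) ℂ) := by
        have : (P : Matrix (Fin n) (Fin n) ℂ) + S = A := by rw [← hPS]; rfl
        push_cast
        rw [← this]; abel
      rw [hcoe]
      exact h.add hS
  · -- D2
    exact fun A hA => Or.inl hA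
  · -- D3
    rintro A B (hA | hA) hBA
    · left
      have hcoe : (B : Matrix (Fin n) (Fin n) ℂ)
          = (A : Matrix (Fin n) (Fin n) ℂ) + ((B - A : Herm n) : Matrix (Fin n) (Fin n) ℂ) := by
        push_cast; abel
      show Matrix.PosDef (B : Matrix (Fin n) (Fin n) ℂ)
      rw [hcoe]
      exact hA.add_posSemidef hBA
    · right
      rw [Set.mem_add] at hA ⊢
      obtain ⟨P, hP, S, hS, hPS⟩ := hA
      refine ⟨P, hP, S + (B - A), ?_, ?_⟩
      · have : ((S + (B - A) : Herm n) : Matrix (Fin n) (Fin n) ℂ)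
            = (S : Matrix (Fin n) (Fin n) ℂ) + ((B - A : Herm n) : Matrix (Fin n) (Fin n) ℂ) := by
          push_cast; rfl
        show Matrix.PosSemidef _
        rw [this]
        exact hS.add hBA
      · rw [← hPS]; abel
  · -- D4
    rintro A B (hA | hA) (hB | hB)
    · exact Or.inl (by
        have : ((A + B : Herm n) : Matrix (Fin n) (Fin n) ℂ)
            = (A : Matrix (Fin n) (Fin n) ℂ) + B := rfl
        show Matrix.PosDef _
        rw [this]; exact hA.add hB)
    · right
      rw [Set.mem_add] at hB ⊢
      obtain ⟨P, hP, S, hS, hPS⟩ := hB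
      refine ⟨P, hP, S + A, ?_, by rw [← hPS]; abel⟩
      show Matrix.PosSemidef _
      have : ((S + A : Herm n) : Matrix (Fin n) (Fin n) ℂ)
          = (S : Matrix (Fin n) (Fin n) ℂ) + A := rfl
      rw [this]
      exact hS.add hA.posSemidef
    · right
      rw [Set.mem_add] at hA ⊢
      obtain ⟨P, hP, S, hS, hPS⟩ := hA
      refine ⟨P, hP, S + B, ?_, by rw [← hPS]; abel⟩
      show Matrix.PosSemidef _
      have : ((S + B : Herm n) : Matrix (Fin n) (Fin n) ℂ)
          = (S : Matrix (Fin n) (Fin n) ℂ) + B := rfl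
      rw [this]
      exact hS.add hB.posSemidef
    · right
      rw [Set.mem_add] at hA hB ⊢
      obtain ⟨P, hP, S, hS, hPS⟩ := hA
      obtain ⟨P', hP', S', hS', hPS'⟩ := hB
      refine ⟨P + P', posi_add hP hP', S + S', ?_, by rw [← hPS, ← hPS']; abel⟩
      show Matrix.PosSemidef _
      have : ((S + S' : Herm n) : Matrix (Fin n) (Fin n) ℂ)
          = (S : Matrix (Fin n) (Fin n) ℂ) + S' := rfl
      rw [this]
      exact hS.add hS'
  · -- D5
    rintro A c (hA | hA) hc
    · exact Or.inl (pd_smul hA hc (c • A : Herm n).prop)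
    · right
      rw [Set.mem_add] at hA ⊢
      obtain ⟨P, hP, S, hS, hPS⟩ := hA
      refine ⟨c • P, posi_smul hP hc, c • S, ?_, by rw [← hPS]; rw [smul_add]⟩
      exact psd_smul hS hc.le (c • S : Herm n).prop

lemma subset_natExt {𝒜 : Set (Herm n)} : 𝒜 ⊆ natExt 𝒜 := by
  intro A hA
  right
  rw [Set.mem_add]
  exact ⟨A, mem_posi_self hA, 0, by
    show Matrix.PosSemidef _
    have : ((0 : Herm n) : Matrix (Fin n) (Fin n) ℂ) = 0 := rfl
    rw [this]; exact Matrix.PosSemidef.zero, add_zero A⟩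

lemma natExt_subset {𝒜 D : Set (Herm n)} (hD : Coherent D) (hsub : 𝒜 ⊆ D) :
    natExt 𝒜 ⊆ D := by
  rintro A (hA | hA)
  · exact hD.2.1 A hA
  · rw [Set.mem_add] at hA
    obtain ⟨P, hP, S, hS, hPS⟩ := hA
    have hPD : P ∈ D := posi_subset hD hsub hP
    refine hD.2.2.1 P A hPD ?_
    have : ((A - P : Herm n) : Matrix (Fin n) (Fin n) ℂ) = (S : Matrix (Fin n) (Fin n) ℂ) := by
      have h1 : (P : Matrix (Fin n) (Fin n) ℂ) + S = A := by rw [← hPS]; rfl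
      push_cast
      rw [← h1]; abel
    rw [this]
    exact hS

end NatExtAux

/-- An assessment `𝒜` is consistent (its `posi` avoids the nonpositive matrices) iff it is
included in some coherent set of desirable measurements; in that case the natural extension
`E(𝒜)` is the smallest coherent set of desirable measurements including `𝒜`. -/
theorem natural_extension (n : ℕ) (hn : 1 ≤ n) (𝒜 : Set (Herm n)) :
    ((¬ ∃ A ∈ posi 𝒜, Matrix.PosSemidef ((-A : Herm n) : Matrix (Fin n) (Fin n) ℂ)) ↔
      ∃ D : Set (Herm n), Coherent D ∧ 𝒜 ⊆ D) ∧
    ((¬ ∃ A ∈ posi 𝒜, Matrix.PosSemidef ((-A : Herm n) : Matrix (Fin n) (Fin n) ℂ)) →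
      Coherent (natExt 𝒜) ∧ 𝒜 ⊆ natExt 𝒜 ∧
        ∀ D : Set (Herm n), Coherent D → 𝒜 ⊆ D → natExt 𝒜 ⊆ D) := by
  constructor
  · constructor
    · intro hcons
      exact ⟨natExt 𝒜, NatExtAux.natExt_coherent hn hcons, NatExtAux.subset_natExt⟩
    · rintro ⟨D, hD, hsub⟩ ⟨A, hA, hpsd⟩
      exact hD.1 A (NatExtAux.posi_subset hD hsub hA) hpsd
  · intro hcons
    exact ⟨NatExtAux.natExt_coherent hn hcons, NatExtAux.subset_natExt,
      fun D hD hsub => NatExtAux.natExt_subset hD hsub⟩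
end

section
/- For every subset 𝒜 ⊆ Herm(n): posi((𝒜 + {B : B PSD}) ∪ {C : C PD}) = {C : C PD} ∪ (posi(𝒜) + {B : B PSD}). -/
open scoped Pointwise ComplexOrder Matrix

lemma real_smul_mat {n : ℕ} (c : ℝ) (A : Matrix (Fin n) (Fin n) ℂ) : c • A = (c:ℂ) • A := by
  ext i j; simp [Complex.real_smul]

lemma psd_smul {n : ℕ} {c : ℝ} (hc : 0 ≤ c) {A : Herm n} (hA : A ∈ PSDset n) :
    c • A ∈ PSDset n := by
  have h : ((c • A : Herm n) : Matrix (Fin n) (Fin n) ℂ) = (c:ℂ) • (A : Matrix (Fin n) (Fin n) ℂ) := by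
    rw [← real_smul_mat]; rfl
  refine ⟨?_, fun x => ?_⟩
  · show ((c • A : Herm n) : Matrix (Fin n) (Fin n) ℂ)ᴴ = _
    rw [h, Matrix.conjTranspose_smul, hA.1]
    congr 1
    simp
  · rw [h]
    exact (Matrix.PosSemidef.smul hA (a := (c:ℂ)) (by exact_mod_cast Complex.zero_le_real.mpr hc)).2 x

lemma pd_smul {n : ℕ} {c : ℝ} (hc : 0 < c) {A : Herm n} (hA : A ∈ PDset n) :
    c • A ∈ PDset n := by
  have h : ((c • A : Herm n) : Matrix (Fin n) (Fin n) ℂ) = (c:ℂ) • (A : Matrix (Fin n) (Fin n) ℂ) := by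
    rw [← real_smul_mat]; rfl
  refine ⟨?_, fun x hx => ?_⟩
  · show ((c • A : Herm n) : Matrix (Fin n) (Fin n) ℂ)ᴴ = _
    rw [h, Matrix.conjTranspose_smul, hA.1]
    congr 1
    simp
  · rw [h]
    exact (Matrix.PosDef.smul hA (a := (c:ℂ)) (by exact_mod_cast Complex.zero_lt_real.mpr hc)).2 hx

lemma psd_add {n : ℕ} {A B : Herm n} (hA : A ∈ PSDset n) (hB : B ∈ PSDset n) :
    A + B ∈ PSDset n := hA.add hB

lemma pd_add_psd {n : ℕ} {A B : Herm n} (hA : A ∈ PDset n) (hB : B ∈ PSDset n) :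
    A + B ∈ PDset n := hA.add_posSemidef hB

lemma psd_add_pd {n : ℕ} {A B : Herm n} (hA : A ∈ PSDset n) (hB : B ∈ PDset n) :
    A + B ∈ PDset n := by
  rw [add_comm]; exact hB.add_posSemidef hA

lemma pd_psd {n : ℕ} {A : Herm n} (hA : A ∈ PDset n) : A ∈ PSDset n := hA.posSemidef

lemma psd_zero {n : ℕ} : (0 : Herm n) ∈ PSDset n := by
  show Matrix.PosSemidef (((0 : Herm n)) : Matrix (Fin n) (Fin n) ℂ)
  have : (((0 : Herm n)) : Matrix (Fin n) (Fin n) ℂ) = 0 := rfl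
  rw [this]; exact Matrix.PosSemidef.zero

section PosiLemmas
variable {n : ℕ}

lemma mem_posi_self {S : Set (Herm n)} {A : Herm n} (hA : A ∈ S) : A ∈ posi S := by
  refine ⟨1, one_pos, fun _ => 1, fun _ => A, fun _ => one_pos, fun _ => hA, ?_⟩
  simp

lemma posi_mono {S T : Set (Herm n)} (h : S ⊆ T) : posi S ⊆ posi T := by
  rintro A ⟨r, hr, c, B, hc, hB, hsum⟩
  exact ⟨r, hr, c, B, hc, fun k => h (hB k), hsum⟩

lemma posi_add {S : Set (Herm n)} {A B : Herm n} (hA : A ∈ posi S) (hB : B ∈ posi S) :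
    A + B ∈ posi S := by
  obtain ⟨r, hr, c, C, hc, hC, hsum⟩ := hA
  obtain ⟨r', hr', c', C', hc', hC', hsum'⟩ := hB
  refine ⟨r + r', by omega, Fin.addCases c c', Fin.addCases C C', ?_, ?_, ?_⟩
  · refine Fin.addCases (fun i => ?_) (fun i => ?_)
    · simpa using hc i
    · simpa using hc' i
  · refine Fin.addCases (fun i => ?_) (fun i => ?_)
    · simpa using hC i
    · simpa using hC' i
  · rw [hsum, hsum', Fin.sum_univ_add]
    simp

lemma posi_smul {S : Set (Herm n)} {t : ℝ} (ht : 0 < t) {A : Herm n} (hA : A ∈ posi S) :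
    t • A ∈ posi S := by
  obtain ⟨r, hr, c, C, hc, hC, hsum⟩ := hA
  refine ⟨r, hr, fun k => t * c k, C, fun k => mul_pos ht (hc k), hC, ?_⟩
  rw [hsum, Finset.smul_sum]
  simp [smul_smul]

lemma posi_min {S T : Set (Herm n)} (hST : S ⊆ T)
    (hadd : ∀ A ∈ T, ∀ B ∈ T, A + B ∈ T)
    (hsmul : ∀ t : ℝ, 0 < t → ∀ A ∈ T, t • A ∈ T) : posi S ⊆ T := by
  rintro A ⟨r, hr, c, B, hc, hB, hsum⟩
  obtain ⟨m, rfl⟩ : ∃ m, r = m + 1 := ⟨r - 1, by omega⟩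
  clear hr
  subst hsum
  induction m with
  | zero => simpa using hsmul _ (hc 0) _ (hST (hB 0))
  | succ m ih =>
      rw [Fin.sum_univ_castSucc]
      exact hadd _ (ih (fun k => c k.castSucc) (fun k => B k.castSucc)
        (fun k => hc _) (fun k => hB _))
        _ (hsmul _ (hc _) _ (hST (hB _)))

lemma posi_absorb {S : Set (Herm n)}
    (hS : ∀ B ∈ S, ∀ p ∈ PSDset n, B + p ∈ S)
    {A : Herm n} (hA : A ∈ posi S) {p : Herm n} (hp : p ∈ PSDset n) :
    A + p ∈ posi S := by
  obtain ⟨r, hr, c, B, hc, hB, hsum⟩ := hA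
  obtain ⟨m, rfl⟩ : ∃ m, r = m + 1 := ⟨r - 1, by omega⟩
  have hc0 : (c 0 : ℝ) ≠ 0 := ne_of_gt (hc 0)
  set B' : Fin (m + 1) → Herm n := Function.update B 0 (B 0 + (c 0)⁻¹ • p) with hB'
  refine ⟨m + 1, Nat.succ_pos m, c, B', hc, ?_, ?_⟩
  · intro k
    by_cases hk : k = 0
    · subst hk
      simp only [hB', Function.update_self]
      exact hS _ (hB 0) _ (psd_smul (le_of_lt (inv_pos.mpr (hc 0))) hp)
    · simpa only [hB', Function.update_of_ne hk] using hB k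
  · have key : ∀ k, c k • B' k = Function.update (fun k => c k • B k) 0
        (c 0 • B 0 + p) k := by
      intro k
      by_cases hk : k = 0
      · subst hk
        simp only [hB', Function.update_self, smul_add, smul_smul,
          mul_inv_cancel₀ hc0, one_smul]
      · simp only [hB', Function.update_of_ne hk]
    rw [hsum]
    calc (∑ k, c k • B k) + p
        = (c 0 • B 0 + p) + ∑ k ∈ Finset.univ \ {0}, c k • B k := by
          rw [Finset.sum_eq_sum_sdiff_singleton_add (Finset.mem_univ 0)
            (fun k => c k • B k)]
          abel
      _ = ∑ k, Function.update (fun k => c k • B k) 0 (c 0 • B 0 + p) k := by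
          rw [Finset.sum_update_of_mem (Finset.mem_univ 0)]
      _ = ∑ k, c k • B' k := by
          exact Finset.sum_congr rfl fun k _ => (key k).symm

end PosiLemmas

/-- The two expressions for the natural extension coincide. -/
theorem posi_natural_extension_eq (n : ℕ) (hn : 1 ≤ n) (𝒜 : Set (Herm n)) :
    posi ((𝒜 + PSDset n) ∪ PDset n) = PDset n ∪ (posi 𝒜 + PSDset n) := by
  apply Set.Subset.antisymm
  · -- LHS ⊆ RHS
    apply posi_min
    · rintro s (⟨a, ha, p, hp, rfl⟩ | hs)
      · exact Or.inr (Set.add_mem_add (mem_posi_self ha) hp)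
      · exact Or.inl hs
    · rintro A (hA | ⟨x, hx, p, hp, rfl⟩) B (hB | ⟨y, hy, q, hq, rfl⟩)
      · exact Or.inl (hA.add hB)
      · refine Or.inr ?_
        have : A + (y + q) = y + (q + A) := by abel
        rw [this]
        exact Set.add_mem_add hy (psd_add hq (pd_psd hA))
      · refine Or.inr ?_
        have : (x + p) + B = x + (p + B) := by abel
        rw [this]
        exact Set.add_mem_add hx (psd_add hp (pd_psd hB))
      · refine Or.inr ?_
        have : (x + p) + (y + q) = (x + y) + (p + q) := by abel
        rw [this]
        exact Set.add_mem_add (posi_add hx hy) (psd_add hp hq)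
    · rintro t ht A (hA | ⟨x, hx, p, hp, rfl⟩)
      · exact Or.inl (pd_smul ht hA)
      · refine Or.inr ?_
        rw [smul_add]
        exact Set.add_mem_add (posi_smul ht hx) (psd_smul (le_of_lt ht) hp)
  · -- RHS ⊆ LHS
    rintro A (hA | ⟨x, hx, p, hp, rfl⟩)
    · exact mem_posi_self (Or.inr hA)
    · have habs : ∀ B ∈ (𝒜 + PSDset n) ∪ PDset n, ∀ q ∈ PSDset n,
          B + q ∈ (𝒜 + PSDset n) ∪ PDset n := by
        rintro B (⟨a, ha, r, hr, rfl⟩ | hB) q hq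
        · refine Or.inl ?_
          have : (a + r) + q = a + (r + q) := by abel
          rw [this]
          exact Set.add_mem_add ha (psd_add hr hq)
        · exact Or.inr (pd_add_psd hB hq)
      have hsub : 𝒜 ⊆ (𝒜 + PSDset n) ∪ PDset n := by
        intro a ha
        refine Or.inl ?_
        have : a = a + 0 := by abel
        rw [this]
        exact Set.add_mem_add ha psd_zero
      exact posi_absorb habs (posi_mono hsub hx) hp
end

section
/- Let D ⊆ Herm(n) be a coherent set of desirable measurements and let I ⊆ Herm(n) be an ℝ-linear subspace with D + I ⊆ D. Then for every A ∈ I: sup{α ∈ ℝ : A − α·1 ∈ D} = 0 and inf{α ∈ ℝ : α·1 − A ∈ D} = 0, where 1 is the identity matrix. -/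
open scoped Pointwise ComplexOrder Matrix

lemma smul_one_eq_diag (n : ℕ) (α : ℝ) :
    α • (1 : Matrix (Fin n) (Fin n) ℂ) = Matrix.diagonal (fun _ => (α : ℂ)) := by
  ext i j
  by_cases h : i = j <;> simp [Matrix.one_apply, Matrix.diagonal_apply, h, Complex.real_smul]

lemma psd_smul_s6 (n : ℕ) (α : ℝ) (hα : 0 ≤ α) :
    Matrix.PosSemidef (α • (1 : Matrix (Fin n) (Fin n) ℂ)) := by
  rw [smul_one_eq_diag]
  exact Matrix.PosSemidef.diagonal (fun i => by positivity)

lemma pd_smul_s6 (n : ℕ) (α : ℝ) (hα : 0 < α) :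
    Matrix.PosDef (α • (1 : Matrix (Fin n) (Fin n) ℂ)) := by
  rw [smul_one_eq_diag, Matrix.posDef_diagonal_iff]
  intro i; positivity

/-- If a coherent set of desirable measurements `D` is compatible with a linear space `I` of
indifferent measurements (`D + I ⊆ D`), then every indifferent measurement has fair price zero:
its supremum buying price and infimum selling price both vanish. -/
theorem indifferent_fair_price_zero (n : ℕ) (hn : 1 ≤ n) (D : Set (Herm n))
    (hD : Coherent D) (I : Submodule ℝ (Herm n))
    (hDI : D + (I : Set (Herm n)) ⊆ D) :
    ∀ A : Herm n, A ∈ I →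
      sSup {α : ℝ | A - α • hermOne n ∈ D} = 0 ∧
      sInf {α : ℝ | α • hermOne n - A ∈ D} = 0 := by
  obtain ⟨hD1, hD2, hD3, hD4, hD5⟩ := hD
  intro A hA
  have hS : {α : ℝ | A - α • hermOne n ∈ D} = Set.Iio 0 := by
    ext α
    simp only [Set.mem_setOf_eq, Set.mem_Iio]
    constructor
    · intro h
      have h2 : (A - α • hermOne n) + (-A) ∈ D :=
        hDI (Set.add_mem_add h (neg_mem hA))
      have h3 : -(α • hermOne n) ∈ D := by
        have : (A - α • hermOne n) + (-A) = -(α • hermOne n) := by abel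
        rwa [this] at h2
      by_contra hα
      push_neg at hα
      refine hD1 _ h3 ?_
      have : ((-(-(α • hermOne n)) : Herm n) : Matrix (Fin n) (Fin n) ℂ)
          = α • (1 : Matrix (Fin n) (Fin n) ℂ) := by
        simp [hermOne]
      rw [this]
      exact psd_smul_s6 n α hα
    · intro hα
      have h1 : -(α • hermOne n) ∈ D := by
        refine hD2 _ ?_
        have : ((-(α • hermOne n) : Herm n) : Matrix (Fin n) (Fin n) ℂ)
            = (-α) • (1 : Matrix (Fin n) (Fin n) ℂ) := by
          simp [hermOne]
        rw [this]
        exact pd_smul_s6 n (-α) (by linarith)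
      have h2 : -(α • hermOne n) + A ∈ D := hDI (Set.add_mem_add h1 hA)
      have : -(α • hermOne n) + A = A - α • hermOne n := by abel
      rwa [this] at h2
  have hT : {α : ℝ | α • hermOne n - A ∈ D} = Set.Ioi 0 := by
    ext α
    simp only [Set.mem_setOf_eq, Set.mem_Ioi]
    constructor
    · intro h
      have h2 : (α • hermOne n - A) + A ∈ D := hDI (Set.add_mem_add h hA)
      have h3 : α • hermOne n ∈ D := by
        have : (α • hermOne n - A) + A = α • hermOne n := by abel
        rwa [this] at h2
      by_contra hα
      push_neg at hα
      refine hD1 _ h3 ?_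
      have : ((-(α • hermOne n) : Herm n) : Matrix (Fin n) (Fin n) ℂ)
          = (-α) • (1 : Matrix (Fin n) (Fin n) ℂ) := by
        simp [hermOne]
      rw [this]
      exact psd_smul_s6 n (-α) (by linarith)
    · intro hα
      have h1 : α • hermOne n ∈ D := by
        refine hD2 _ ?_
        have : ((α • hermOne n : Herm n) : Matrix (Fin n) (Fin n) ℂ)
            = α • (1 : Matrix (Fin n) (Fin n) ℂ) := by
          simp [hermOne]
        rw [this]
        exact pd_smul_s6 n α hα
      have h2 : α • hermOne n + (-A) ∈ D := hDI (Set.add_mem_add h1 (neg_mem hA))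
      have : α • hermOne n + (-A) = α • hermOne n - A := by abel
      rwa [this] at h2
  rw [hS, hT]
  exact ⟨csSup_Iio, csInf_Ioi⟩
end

section
/- Let P be an n×n complex matrix with P² = P and Pᴴ = P (an orthogonal projection matrix), and let I_V := {A ∈ Herm(n) : PAP = 0}. Then for every coherent set of desirable measurements D ⊆ Herm(n), the following are equivalent: (i) D + I_V ⊆ D; (ii) for all A ∈ Herm(n), A ∈ D if and only if PAP ∈ D. -/
open scoped Pointwise ComplexOrder Matrix

/-- Conjugation `A ↦ P A P` by a Hermitian matrix `P`, as a map on Hermitian matrices. -/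
noncomputable def conjProj {n : ℕ} (P : Matrix (Fin n) (Fin n) ℂ) (hPH : Pᴴ = P)
    (A : Herm n) : Herm n :=
  ⟨P * (A : Matrix (Fin n) (Fin n) ℂ) * P, by
    have hA : (A : Matrix (Fin n) (Fin n) ℂ)ᴴ = A := A.prop
    show (P * (A : Matrix (Fin n) (Fin n) ℂ) * P)ᴴ = P * (A : Matrix (Fin n) (Fin n) ℂ) * P
    rw [Matrix.conjTranspose_mul, Matrix.conjTranspose_mul, hPH, hA, Matrix.mul_assoc]⟩

/-- A coherent set of desirable measurements `D` is compatible with the indifferent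
measurements `I_V = {A : P A P = 0}` of an orthogonal projection matrix `P` iff it is
focused: `A ∈ D ⟺ P A P ∈ D`. -/
theorem compatible_iff_focused_subspace (n : ℕ) (hn : 1 ≤ n)
    (P : Matrix (Fin n) (Fin n) ℂ) (hP2 : P * P = P) (hPH : Pᴴ = P)
    (D : Set (Herm n)) (hD : Coherent D) :
    (D + {A : Herm n | P * (A : Matrix (Fin n) (Fin n) ℂ) * P = 0} ⊆ D) ↔
    (∀ A : Herm n, A ∈ D ↔ conjProj P hPH A ∈ D) := by
  have key : ∀ A : Herm n,
      P * ((A - conjProj P hPH A : Herm n) : Matrix (Fin n) (Fin n) ℂ) * P = 0 := by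
    intro A
    have : ((A - conjProj P hPH A : Herm n) : Matrix (Fin n) (Fin n) ℂ)
        = (A : Matrix (Fin n) (Fin n) ℂ) - P * (A : Matrix (Fin n) (Fin n) ℂ) * P := rfl
    rw [this, Matrix.mul_sub, Matrix.sub_mul]
    have h1 : P * (P * (A : Matrix (Fin n) (Fin n) ℂ) * P) * P
        = P * (A : Matrix (Fin n) (Fin n) ℂ) * P := by
      simp only [← Matrix.mul_assoc]
      rw [hP2, Matrix.mul_assoc (P * (A : Matrix (Fin n) (Fin n) ℂ)) P P, hP2]
    rw [h1, sub_self]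
  constructor
  · intro h A
    constructor
    · intro hA
      have hmem : conjProj P hPH A - A ∈
          {A : Herm n | P * (A : Matrix (Fin n) (Fin n) ℂ) * P = 0} := by
        have : ((conjProj P hPH A - A : Herm n) : Matrix (Fin n) (Fin n) ℂ)
            = -((A - conjProj P hPH A : Herm n) : Matrix (Fin n) (Fin n) ℂ) := by
          push_cast
          exact (neg_sub _ _).symm
        simp only [Set.mem_setOf_eq, this, Matrix.mul_neg, Matrix.neg_mul, key A, neg_zero]
      have := h (Set.add_mem_add hA hmem)
      simpa using this
    · intro hA
      have hmem : A - conjProj P hPH A ∈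
          {A : Herm n | P * (A : Matrix (Fin n) (Fin n) ℂ) * P = 0} := key A
      have := h (Set.add_mem_add hA hmem)
      simpa using this
  · intro h X hX
    rw [Set.mem_add] at hX
    obtain ⟨A, hA, B, hB, rfl⟩ := hX
    have hBP : P * (B : Matrix (Fin n) (Fin n) ℂ) * P = 0 := hB
    have hconj : conjProj P hPH (A + B) = conjProj P hPH A := by
      apply Subtype.ext
      show P * ((A : Matrix (Fin n) (Fin n) ℂ) + B) * P = P * (A : Matrix (Fin n) (Fin n) ℂ) * P
      rw [Matrix.mul_add, Matrix.add_mul, hBP, add_zero]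
    rw [h (A + B), hconj, ← h A]
    exact hA
end

section
/- Let Π : Herm(n) → Herm(n) be an ℝ-linear map with Π∘Π = Π such that Π(A) is PSD whenever A is PSD, and let B_Π := {A ∈ Herm(n) : there exists K with Π(K) = 0 and Π(A) − K PD}. Then for every coherent set of desirable measurements D ⊆ Herm(n): D + ker Π ⊆ D if and only if D = B_Π ∪ {A ∈ Herm(n) : Π(A) ∈ D}, where ker Π := {A : Π(A) = 0}. -/
open scoped Pointwise ComplexOrder Matrix

/-- A coherent set of desirable measurements `D` is compatible with the kernel of a
PSD-preserving linear projection `T` iff `D` equals the union of the updated background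
`B_T = {A : ∃ K ∈ ker T, T A − K is PD}` with `{A : T A ∈ D}`. -/
theorem compatible_iff_conditioned_form (n : ℕ) (hn : 1 ≤ n) (T : Herm n →ₗ[ℝ] Herm n)
    (hproj : ∀ A : Herm n, T (T A) = T A)
    (hpos : ∀ A : Herm n, Matrix.PosSemidef (A : Matrix (Fin n) (Fin n) ℂ) →
      Matrix.PosSemidef ((T A : Herm n) : Matrix (Fin n) (Fin n) ℂ))
    (D : Set (Herm n)) (hD : Coherent D) :
    (D + {A : Herm n | T A = 0} ⊆ D) ↔
      D = {A : Herm n | ∃ K : Herm n, T K = 0 ∧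
            Matrix.PosDef ((T A - K : Herm n) : Matrix (Fin n) (Fin n) ℂ)} ∪
          {A : Herm n | T A ∈ D} := by
  obtain ⟨hD1, hD2, hD3, hD4, hD5⟩ := hD
  constructor
  · intro hcompat
    ext A
    constructor
    · intro hA
      right
      show T A ∈ D
      have hk : (T A - A) ∈ ({A : Herm n | T A = 0} : Set (Herm n)) := by
        show T (T A - A) = 0
        rw [map_sub, hproj, sub_self]
      have hrw : T A = A + (T A - A) := by abel
      rw [hrw]
      exact hcompat (Set.add_mem_add hA hk)
    · rintro (⟨K, hK, hPD⟩ | hA)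
      · have h1 : (T A - K) ∈ D := hD2 _ hPD
        have h2 : (A - T A + K) ∈ ({A : Herm n | T A = 0} : Set (Herm n)) := by
          show T (A - T A + K) = 0
          rw [map_add, map_sub, hproj, hK, sub_self, zero_add]
        have hrw : A = (T A - K) + (A - T A + K) := by abel
        rw [hrw]
        exact hcompat (Set.add_mem_add h1 h2)
      · have h2 : (A - T A) ∈ ({A : Herm n | T A = 0} : Set (Herm n)) := by
          show T (A - T A) = 0
          rw [map_sub, hproj, sub_self]
        have hrw : A = T A + (A - T A) := by abel
        rw [hrw]
        exact hcompat (Set.add_mem_add hA h2)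
  · intro hEq X hX
    rw [Set.mem_add] at hX
    obtain ⟨A, hA, N, hN, rfl⟩ := hX
    have hTN : T N = 0 := hN
    have hT : T (A + N) = T A := by rw [map_add, hTN, add_zero]
    rw [hEq] at hA ⊢
    rcases hA with ⟨K, hK, hPD⟩ | hA
    · left
      exact ⟨K, hK, by rw [hT]; exact hPD⟩
    · right
      show T (A + N) ∈ D
      rw [hT]
      exact hA
end

section
/- Let Π : Herm(n) → Herm(n) be an ℝ-linear map with Π∘Π = Π such that Π(A) is PSD whenever A is PSD; write rng Π := {A : Π(A) = A}, C_≥ := {C ∈ rng Π : C PSD} and C_> := {C ∈ rng Π : ∃K with Π(K) = 0 and C − K PD}. Let D_o ⊆ rng Π satisfy: (i) D_o contains no C with −C ∈ C_≥; (ii) C_> ⊆ D_o; (iii) if C ∈ D_o, C' ∈ rng Π and C' − C ∈ C_≥ then C' ∈ D_o; (iv) if C, C' ∈ D_o then C + C' ∈ D_o; (v) if C ∈ D_o and λ > 0 then λC ∈ D_o. Then D := {A ∈ Herm(n) : Π(A) ∈ D_o} is a coherent set of desirable measurements, satisfies (A ∈ D ⟺ Π(A) ∈ D) for all A ∈ Herm(n),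 and D ∩ rng Π = D_o. -/
open scoped Pointwise ComplexOrder Matrix

/-- The range of a linear projection `T` on `Herm n` (its fixed points). -/
def rngSet {n : ℕ} (T : Herm n →ₗ[ℝ] Herm n) : Set (Herm n) := {A | T A = A}

/-- The cone `C_≥`: elements of the range of `T` that are positive semidefinite. -/
def Cge {n : ℕ} (T : Herm n →ₗ[ℝ] Herm n) : Set (Herm n) :=
  {C | T C = C ∧ Matrix.PosSemidef (C : Matrix (Fin n) (Fin n) ℂ)}

/-- The cone `C_>`: elements `C` of the range of `T` dominating some kernel element
in the positive definite sense. -/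
def Cgt {n : ℕ} (T : Herm n →ₗ[ℝ] Herm n) : Set (Herm n) :=
  {C | T C = C ∧ ∃ K : Herm n, T K = 0 ∧
    Matrix.PosDef ((C - K : Herm n) : Matrix (Fin n) (Fin n) ℂ)}

/-- A set `D_o` of desirable measurements in the range of a PSD-preserving linear
projection `T` that is coherent there (with respect to the quotient cones `C_≥`, `C_>`)
extends to the coherent, range-focused set `D = {A : T A ∈ D_o}` in `Herm n`,
whose restriction to the range is again `D_o`. -/
theorem range_coherent_extends (n : ℕ) (hn : 1 ≤ n) (T : Herm n →ₗ[ℝ] Herm n)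
    (hproj : ∀ A : Herm n, T (T A) = T A)
    (hpos : ∀ A : Herm n, Matrix.PosSemidef (A : Matrix (Fin n) (Fin n) ℂ) →
      Matrix.PosSemidef ((T A : Herm n) : Matrix (Fin n) (Fin n) ℂ))
    (Do : Set (Herm n)) (hDo : Do ⊆ rngSet T)
    (h1 : ∀ C ∈ Do, ¬ (-C ∈ Cge T))
    (h2 : Cgt T ⊆ Do)
    (h3 : ∀ C ∈ Do, ∀ C' ∈ rngSet T, C' - C ∈ Cge T → C' ∈ Do)
    (h4 : ∀ C ∈ Do, ∀ C' ∈ Do, C + C' ∈ Do)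
    (h5 : ∀ C ∈ Do, ∀ c : ℝ, 0 < c → c • C ∈ Do) :
    Coherent {A : Herm n | T A ∈ Do} ∧
    (∀ A : Herm n, A ∈ {A : Herm n | T A ∈ Do} ↔ T A ∈ {A : Herm n | T A ∈ Do}) ∧
    {A : Herm n | T A ∈ Do} ∩ rngSet T = Do := by
  refine ⟨⟨?_, ?_, ?_, ?_, ?_⟩, ?_, ?_⟩
  · -- D1
    intro A hA hneg
    refine h1 (T A) hA ⟨?_, ?_⟩
    · rw [map_neg, hproj]
    · have := hpos (-A) hneg
      rwa [map_neg] at this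
  · -- D2
    intro A hA
    refine h2 ⟨hproj A, T A - A, ?_, ?_⟩
    · rw [map_sub, hproj, sub_self]
    · simpa using hA
  · -- D3
    intro A B hA hBA
    refine h3 (T A) hA (T B) (hproj B) ⟨?_, ?_⟩
    · rw [map_sub, hproj, hproj]
    · have := hpos (B - A) hBA
      rwa [map_sub] at this
  · -- D4
    intro A B hA hB
    show T (A + B) ∈ Do
    rw [map_add]; exact h4 _ hA _ hB
  · -- D5
    intro A c hA hc
    show T (c • A) ∈ Do
    rw [map_smul]; exact h5 _ hA c hc
  · intro A
    simp only [Set.mem_setOf_eq, hproj]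
  · ext A
    constructor
    · rintro ⟨hA, hr⟩
      have hA' : T A ∈ Do := hA
      rwa [hr] at hA'
    · intro hA
      exact ⟨by rw [Set.mem_setOf_eq, hDo hA]; exact hA, hDo hA⟩
end

section
/- Let Π : Herm(n) → Herm(n) be an ℝ-linear map with Π∘Π = Π such that Π(A) is PSD whenever A is PSD; write rng Π := {A : Π(A) = A}, C_≥ := {C ∈ rng Π : C PSD} and C_> := {C ∈ rng Π : ∃K with Π(K) = 0 and C − K PD}. Then for every coherent set of desirable measurements D ⊆ Herm(n): (D ∩ rng Π) + C_≥ = D ∩ rng Π, and C_> ∪ posi((D ∩ rng Π) + C_≥) = C_> ∪ (D ∩ rng Π). -/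
open scoped Pointwise ComplexOrder Matrix

lemma sumD_aux {n : ℕ} {D : Set (Herm n)}
    (hD4 : ∀ A B : Herm n, A ∈ D → B ∈ D → A + B ∈ D) :
    ∀ r : ℕ, 0 < r → ∀ f : Fin r → Herm n, (∀ k, f k ∈ D) → (∑ k, f k) ∈ D := by
  intro r
  induction r with
  | zero => intro h; omega
  | succ m ih =>
    intro _ f hf
    rcases Nat.eq_zero_or_pos m with hm | hm
    · subst hm; simpa using hf 0
    · rw [Fin.sum_univ_succ]
      exact hD4 _ _ (hf 0) (ih hm _ (fun k => hf k.succ))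

/-- For a coherent set of desirable measurements `D` and a PSD-preserving linear
projection `T`: the restriction `D ∩ rng T` absorbs the cone `C_≥`, and the natural
extension of `D ∩ rng T` in the range collapses to `C_> ∪ (D ∩ rng T)`. -/
theorem conditioned_local_simplification (n : ℕ) (hn : 1 ≤ n) (T : Herm n →ₗ[ℝ] Herm n)
    (hproj : ∀ A : Herm n, T (T A) = T A)
    (hpos : ∀ A : Herm n, Matrix.PosSemidef (A : Matrix (Fin n) (Fin n) ℂ) →
      Matrix.PosSemidef ((T A : Herm n) : Matrix (Fin n) (Fin n) ℂ))
    (D : Set (Herm n)) (hD : Coherent D) :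
    (D ∩ rngSet T) + Cge T = D ∩ rngSet T ∧
    Cgt T ∪ posi ((D ∩ rngSet T) + Cge T) = Cgt T ∪ (D ∩ rngSet T) := by
  obtain ⟨hD1, hD2, hD3, hD4, hD5⟩ := hD
  have h1 : (D ∩ rngSet T) + Cge T = D ∩ rngSet T := by
    apply Set.Subset.antisymm
    · rintro x ⟨a, ⟨haD, haR⟩, c, ⟨hcR, hcP⟩, rfl⟩
      refine ⟨hD3 a (a + c) haD ?_, ?_⟩
      · have h : a + c - a = c := by abel
        rw [h]; exact hcP
      · show T (a + c) = a + c
        rw [map_add, haR, hcR]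
    · intro x hx
      refine ⟨x, hx, 0, ⟨by simp, by simpa using Matrix.PosSemidef.zero⟩, by simp⟩
  have h2 : posi ((D ∩ rngSet T) + Cge T) = D ∩ rngSet T := by
    rw [h1]
    apply Set.Subset.antisymm
    · rintro x ⟨r, hr, c, B, hc, hB, rfl⟩
      constructor
      · exact sumD_aux hD4 r hr _ (fun k => hD5 _ _ (hB k).1 (hc k))
      · show T (∑ k, c k • B k) = ∑ k, c k • B k
        rw [map_sum]
        refine Finset.sum_congr rfl (fun k _ => ?_)
        rw [map_smul, (hB k).2]
    · intro x hx
      exact ⟨1, one_pos, fun _ => 1, fun _ => x, fun _ => one_pos,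
        fun _ => hx, by simp⟩
  exact ⟨h1, by rw [h2]⟩
end
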